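/- Let 0 = x_0 < x_1 < … < x_N = 1 be an arbitrary mesh and let ε > 0. Let b, c : [0,1] → ℝ be continuous with b(x) ≥ β > 0 and c(x) ≥ 0. Then the upwind matrix A_N is an L-matrix, and the vector w with w_i = 2 − x_i satisfies w_i > 0 and (A_N w)_i ≥ min{1, β} for all i = 0,…,N. Consequently A_N is an M-matrix (invertible with entrywise nonnegative inverse) and ‖A_N⁻¹‖ ≤ 2/min{1, β}, uniformly in ε and in the mesh. -/

import Mathlib

/-- Maximum absolute row sum norm of a matrix. -/
noncomputable def matNorm {n : ℕ} (A : Matrix (Fin n) (Fin n) ℝ) : ℝ :=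
  ⨆ i, ∑ j, |A i j|

/-- Maximum norm of a vector. -/
noncomputable def vecNorm {n : ℕ} (v : Fin n → ℝ) : ℝ := ⨆ i, |v i|

/-- The upwind finite-difference matrix `A_N` on the mesh `x` for
`-ε u'' - b u' + c u`, with Dirichlet rows `0` and `N`. -/
noncomputable def upwind (b c : ℝ → ℝ) (ε : ℝ) (N : ℕ) (x : ℕ → ℝ) :
    Matrix (Fin (N + 1)) (Fin (N + 1)) ℝ :=
  fun i j =>
    let h : ℕ → ℝ := fun k => x k - x (k - 1)
    let hb : ℕ → ℝ := fun k => (h k + h (k + 1)) / 2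
    if (i : ℕ) = 0 ∨ (i : ℕ) = N then (if j = i then 1 else 0)
    else if (j : ℕ) + 1 = (i : ℕ) then -ε / (h (i : ℕ) * hb (i : ℕ))
    else if (j : ℕ) = (i : ℕ) + 1 then
      -ε / (h ((i : ℕ) + 1) * hb (i : ℕ)) - b (x (i : ℕ)) / h ((i : ℕ) + 1)
    else if j = i then
      ε / (h (i : ℕ) * hb (i : ℕ)) +
        (ε / (h ((i : ℕ) + 1) * hb (i : ℕ)) + b (x (i : ℕ)) / h ((i : ℕ) + 1)) +
        c (x (i : ℕ))
    else 0

/-!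
If `A` has nonpositive off-diagonal entries and some `w > 0` has `A w ≥ γ > 0`, then `A` satisfies
a discrete maximum principle (`A u ≥ 0 ⇒ u ≥ 0`), so it is invertible with `A⁻¹ ≥ 0`, and
`γ · A⁻¹ 𝟙 ≤ A⁻¹ A w = w` bounds the row sums of `A⁻¹` by `max w / γ`. For the upwind matrix on
`[0, 1]`, `w = 2 - x` does the job with `γ = min 1 β`: the boundary rows return `w ≥ 1`, and on an
interior row the diffusion terms cancel because `w` is affine, leaving `b(xᵢ) + c(xᵢ) wᵢ ≥ β`.
-/

open Matrix Set

namespace Matrix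

variable {ι 𝕜 : Type*} [Fintype ι]
  [Field 𝕜] [LinearOrder 𝕜] [IsStrictOrderedRing 𝕜] {A : Matrix ι ι 𝕜} {w : ι → 𝕜}

theorem nonneg_of_mulVec_nonneg (hoff : ∀ i j, i ≠ j → A i j ≤ 0) (hw : ∀ i, 0 < w i)
    (hAw : ∀ i, 0 < (A *ᵥ w) i) {u : ι → 𝕜} (hu : 0 ≤ A *ᵥ u) : 0 ≤ u := by
  intro i
  by_contra! hui
  -- `s` is the least multiple of `w` making `u + s • w` nonnegative; it vanishes at `k`.
  obtain ⟨k, -, hk⟩ :=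
    Finset.exists_max_image Finset.univ (fun j => -u j / w j) ⟨i, Finset.mem_univ i⟩
  set s := -u k / w k
  have hs : 0 < s := (div_pos (neg_pos.mpr hui) (hw i)).trans_le (hk i (Finset.mem_univ i))
  have hv : ∀ j, 0 ≤ (u + s • w) j := fun j => by
    have := (div_le_iff₀ (hw j)).mp (hk j (Finset.mem_univ j))
    simp only [Pi.add_apply, Pi.smul_apply, smul_eq_mul]
    linarith
  have hvk : (u + s • w) k = 0 := by
    simp only [Pi.add_apply, Pi.smul_apply, smul_eq_mul, s, div_mul_cancel₀ _ (hw k).ne']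
    ring
  have hpos : 0 < (A *ᵥ (u + s • w)) k := by
    rw [mulVec_add, mulVec_smul, Pi.add_apply, Pi.smul_apply, smul_eq_mul]
    exact add_pos_of_nonneg_of_pos (hu k) (mul_pos hs (hAw k))
  have hnonpos : (A *ᵥ (u + s • w)) k ≤ 0 := by
    refine Finset.sum_nonpos fun j _ => ?_
    rcases eq_or_ne k j with rfl | hkj
    · rw [hvk, mul_zero]
    · exact mul_nonpos_of_nonpos_of_nonneg (hoff k j hkj) (hv j)
  exact hpos.not_ge hnonpos

variable [DecidableEq ι]

theorem det_ne_zero_of_mulVec_pos (hoff : ∀ i j, i ≠ j → A i j ≤ 0) (hw : ∀ i, 0 < w i)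
    (hAw : ∀ i, 0 < (A *ᵥ w) i) : A.det ≠ 0 := by
  intro hdet
  obtain ⟨v, hv, hAv⟩ := exists_mulVec_eq_zero_iff.mpr hdet
  have hv_nonneg := nonneg_of_mulVec_nonneg hoff hw hAw (u := v) hAv.ge
  have hneg_nonneg := nonneg_of_mulVec_nonneg hoff hw hAw (u := -v)
    (by rw [mulVec_neg, hAv, neg_zero])
  exact hv (le_antisymm (neg_nonneg.mp hneg_nonneg) hv_nonneg)

theorem inv_apply_nonneg_of_mulVec_pos (hoff : ∀ i j, i ≠ j → A i j ≤ 0) (hw : ∀ i, 0 < w i)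
    (hAw : ∀ i, 0 < (A *ᵥ w) i) (i j : ι) : 0 ≤ A⁻¹ i j := by
  have hdet : IsUnit A.det := (det_ne_zero_of_mulVec_pos hoff hw hAw).isUnit
  have hcol := nonneg_of_mulVec_nonneg hoff hw hAw (u := A⁻¹ *ᵥ Pi.single j 1) (by
    rw [mulVec_mulVec, mul_nonsing_inv _ hdet, one_mulVec]
    exact Pi.single_nonneg.mpr zero_le_one)
  simpa [mulVec_single_one] using hcol i

theorem sum_inv_apply_mul_le (hoff : ∀ i j, i ≠ j → A i j ≤ 0) (hw : ∀ i, 0 < w i)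
    {γ : 𝕜} (hγ : 0 < γ) (hAw : ∀ i, γ ≤ (A *ᵥ w) i) (i : ι) : (∑ j, A⁻¹ i j) * γ ≤ w i := by
  have hAw' : ∀ i, 0 < (A *ᵥ w) i := fun i => hγ.trans_le (hAw i)
  have hdet : IsUnit A.det := (det_ne_zero_of_mulVec_pos hoff hw hAw').isUnit
  calc (∑ j, A⁻¹ i j) * γ = ∑ j, A⁻¹ i j * γ := Finset.sum_mul ..
    _ ≤ ∑ j, A⁻¹ i j * (A *ᵥ w) j := Finset.sum_le_sum fun j _ =>
        mul_le_mul_of_nonneg_left (hAw j) (inv_apply_nonneg_of_mulVec_pos hoff hw hAw' i j)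
    _ = (A⁻¹ *ᵥ (A *ᵥ w)) i := rfl
    _ = w i := by rw [mulVec_mulVec, nonsing_inv_mul _ hdet, one_mulVec]

end Matrix

theorem matNorm_inv_le {n : ℕ} [NeZero n] {A : Matrix (Fin n) (Fin n) ℝ} {w : Fin n → ℝ}
    (hoff : ∀ i j, i ≠ j → A i j ≤ 0) (hw : ∀ i, 0 < w i) {γ M : ℝ} (hγ : 0 < γ)
    (hAw : ∀ i, γ ≤ (A *ᵥ w) i) (hwM : ∀ i, w i ≤ M) : matNorm A⁻¹ ≤ M / γ := by
  refine ciSup_le fun i => ?_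
  have hAw' : ∀ i, 0 < (A *ᵥ w) i := fun i => hγ.trans_le (hAw i)
  rw [le_div_iff₀ hγ]
  calc (∑ j, |A⁻¹ i j|) * γ = (∑ j, A⁻¹ i j) * γ := by
        simp only [abs_of_nonneg (inv_apply_nonneg_of_mulVec_pos hoff hw hAw' i _)]
    _ ≤ w i := sum_inv_apply_mul_le hoff hw hγ hAw i
    _ ≤ M := hwM i

noncomputable def meshWidth (x : ℕ → ℝ) (k : ℕ) : ℝ := x k - x (k - 1)

noncomputable def meshWidthAvg (x : ℕ → ℝ) (k : ℕ) : ℝ := (meshWidth x k + meshWidth x (k + 1)) / 2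

/-- The entry `a_{i,i-1}` of an interior row of `upwind`; `upwindSuper` is `a_{i,i+1}`. -/
noncomputable def upwindSub (ε : ℝ) (x : ℕ → ℝ) (i : ℕ) : ℝ :=
  -ε / (meshWidth x i * meshWidthAvg x i)

noncomputable def upwindSuper (b : ℝ → ℝ) (ε : ℝ) (x : ℕ → ℝ) (i : ℕ) : ℝ :=
  -ε / (meshWidth x (i + 1) * meshWidthAvg x i) - b (x i) / meshWidth x (i + 1)

section Mesh

variable {N : ℕ} {x : ℕ → ℝ} (hmono : ∀ i < N, x i < x (i + 1))
include hmono

theorem meshWidth_pos {k : ℕ} (hk0 : k ≠ 0) (hkN : k ≤ N) : 0 < meshWidth x k := by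
  obtain ⟨m, rfl⟩ := Nat.exists_eq_succ_of_ne_zero hk0
  simpa [meshWidth] using hmono m (by omega)

theorem meshWidthAvg_pos {k : ℕ} (hk0 : k ≠ 0) (hkN : k < N) : 0 < meshWidthAvg x k :=
  half_pos (add_pos (meshWidth_pos hmono hk0 hkN.le) (meshWidth_pos hmono k.succ_ne_zero hkN))

theorem mesh_mem_Icc (hx0 : x 0 = 0) (hxN : x N = 1) {k : ℕ} (hk : k ≤ N) : x k ∈ Icc 0 1 := by
  have hx : MonotoneOn x (Iic N) := (strictMonoOn_Iic_of_lt_succ hmono).monotoneOn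
  exact ⟨hx0 ▸ hx (Nat.zero_le N) hk (Nat.zero_le k), hxN ▸ hx hk (le_refl N) hk⟩

end Mesh

section Upwind

variable {b c : ℝ → ℝ} {ε : ℝ} {N : ℕ} {x : ℕ → ℝ}

theorem upwind_row_of_boundary {i : Fin (N + 1)} (hi : (i : ℕ) = 0 ∨ (i : ℕ) = N) :
    upwind b c ε N x i = Pi.single i 1 := by
  ext j
  simp only [upwind, if_pos hi, Pi.single_apply]

theorem upwind_row_of_interior {i : Fin (N + 1)} (hi0 : (i : ℕ) ≠ 0) (hiN : (i : ℕ) ≠ N) :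
    upwind b c ε N x i =
      Pi.single ⟨i - 1, by omega⟩ (upwindSub ε x i) +
      Pi.single i (-upwindSub ε x i - upwindSuper b ε x i + c (x i)) +
      Pi.single ⟨i + 1, by omega⟩ (upwindSuper b ε x i) := by
  ext j
  simp only [upwind, hi0, hiN, or_self, if_false, Pi.add_apply, Pi.single_apply, Fin.ext_iff,
    upwindSub, upwindSuper, meshWidth, meshWidthAvg, Nat.add_sub_cancel]
  split_ifs <;> first | omega | ring

theorem upwind_mulVec_of_boundary (v : Fin (N + 1) → ℝ) {i : Fin (N + 1)}
    (hi : (i : ℕ) = 0 ∨ (i : ℕ) = N) : (upwind b c ε N x *ᵥ v) i = v i := by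
  change upwind b c ε N x i ⬝ᵥ v = v i
  rw [upwind_row_of_boundary hi, single_dotProduct, one_mul]

theorem upwind_mulVec_of_interior (v : ℕ → ℝ) {i : Fin (N + 1)} (hi0 : (i : ℕ) ≠ 0)
    (hiN : (i : ℕ) ≠ N) :
    (upwind b c ε N x *ᵥ fun j => v j) i =
      upwindSub ε x i * (v (i - 1) - v i) + upwindSuper b ε x i * (v (i + 1) - v i) +
        c (x i) * v i := by
  change upwind b c ε N x i ⬝ᵥ _ = _
  rw [upwind_row_of_interior hi0 hiN]
  simp only [add_dotProduct, single_dotProduct]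
  ring

theorem upwind_mulVec_two_sub_mesh (hmono : ∀ i < N, x i < x (i + 1)) {i : Fin (N + 1)}
    (hi0 : (i : ℕ) ≠ 0) (hiN : (i : ℕ) < N) :
    (upwind b c ε N x *ᵥ fun j => 2 - x j) i = b (x i) + c (x i) * (2 - x i) := by
  rw [upwind_mulVec_of_interior (fun k => 2 - x k) hi0 hiN.ne]
  have h₁ := meshWidth_pos hmono hi0 hiN.le
  have h₂ := meshWidth_pos hmono (i : ℕ).succ_ne_zero hiN
  have hsub : 2 - x (i - 1) - (2 - x i) = meshWidth x i := by simp only [meshWidth]; ring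
  have hsuper : 2 - x (i + 1) - (2 - x i) = -meshWidth x (i + 1) := by
    simp only [meshWidth, Nat.add_sub_cancel]; ring
  rw [hsub, hsuper]
  simp only [upwindSub, upwindSuper, meshWidthAvg]
  field_simp
  ring

theorem min_one_le_upwind_mulVec (hmono : ∀ i < N, x i < x (i + 1)) (hx0 : x 0 = 0)
    (hxN : x N = 1) {β : ℝ} (hbβ : ∀ t ∈ Icc (0 : ℝ) 1, β ≤ b t)
    (hc : ∀ t ∈ Icc (0 : ℝ) 1, 0 ≤ c t) (i : Fin (N + 1)) :
    min 1 β ≤ (upwind b c ε N x *ᵥ fun j => 2 - x j) i := by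
  have hxi := mesh_mem_Icc hmono hx0 hxN (Nat.lt_succ_iff.mp i.isLt)
  by_cases hi : (i : ℕ) = 0 ∨ (i : ℕ) = N
  · rw [upwind_mulVec_of_boundary _ hi]
    linarith [min_le_left 1 β, hxi.2]
  obtain ⟨hi0, hiN⟩ := not_or.mp hi
  rw [upwind_mulVec_two_sub_mesh hmono hi0 (by omega)]
  nlinarith [min_le_right 1 β, hbβ _ hxi, hc _ hxi, hxi.2]

variable (hmono : ∀ i < N, x i < x (i + 1)) (hε : 0 < ε)
include hmono hε

theorem upwindSub_neg {i : ℕ} (hi0 : i ≠ 0) (hiN : i < N) : upwindSub ε x i < 0 :=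
  div_neg_of_neg_of_pos (neg_neg_of_pos hε)
    (mul_pos (meshWidth_pos hmono hi0 hiN.le) (meshWidthAvg_pos hmono hi0 hiN))

theorem upwindSuper_neg {i : ℕ} (hi0 : i ≠ 0) (hiN : i < N) (hb : 0 ≤ b (x i)) :
    upwindSuper b ε x i < 0 := by
  have hh := meshWidth_pos hmono i.succ_ne_zero hiN
  have hsub : -ε / (meshWidth x (i + 1) * meshWidthAvg x i) < 0 :=
    div_neg_of_neg_of_pos (neg_neg_of_pos hε) (mul_pos hh (meshWidthAvg_pos hmono hi0 hiN))
  exact sub_neg.mpr (hsub.trans_le (div_nonneg hb hh.le))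

variable (hx0 : x 0 = 0) (hxN : x N = 1) (hb : ∀ t ∈ Icc (0 : ℝ) 1, 0 ≤ b t)
include hx0 hxN hb

theorem upwind_apply_self_pos (hc : ∀ t ∈ Icc (0 : ℝ) 1, 0 ≤ c t) (i : Fin (N + 1)) :
    0 < upwind b c ε N x i i := by
  by_cases hi : (i : ℕ) = 0 ∨ (i : ℕ) = N
  · simp [upwind_row_of_boundary hi]
  obtain ⟨hi0, hiN⟩ := not_or.mp hi
  have hi : (i : ℕ) < N := by omega
  have hxi := mesh_mem_Icc hmono hx0 hxN hi.le
  rw [upwind_row_of_interior hi0 hiN]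
  simp only [Pi.add_apply, Pi.single_eq_same, Pi.single_eq_of_ne, ne_eq, Fin.ext_iff,
    show (i : ℕ) ≠ i - 1 by omega, show (i : ℕ) ≠ i + 1 by omega, not_false_eq_true, zero_add,
    add_zero]
  linarith [upwindSub_neg hmono hε hi0 hi, upwindSuper_neg hmono hε hi0 hi (hb _ hxi), hc _ hxi]

theorem upwind_apply_nonpos {i j : Fin (N + 1)} (hij : i ≠ j) : upwind b c ε N x i j ≤ 0 := by
  by_cases hi : (i : ℕ) = 0 ∨ (i : ℕ) = N
  · simp [upwind_row_of_boundary hi, hij.symm]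
  obtain ⟨hi0, hiN⟩ := not_or.mp hi
  have hi : (i : ℕ) < N := by omega
  have hxi := mesh_mem_Icc hmono hx0 hxN hi.le
  rw [upwind_row_of_interior hi0 hiN]
  simp only [Pi.add_apply, Pi.single_eq_of_ne' hij, add_zero]
  exact add_nonpos (Pi.single_nonpos.mpr (upwindSub_neg hmono hε hi0 hi).le j)
    (Pi.single_nonpos.mpr (upwindSuper_neg hmono hε hi0 hi (hb _ hxi)).le j)

end Upwind

theorem stmt_8_general (N : ℕ) (x : ℕ → ℝ) (hx0 : x 0 = 0) (hxN : x N = 1)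
    (hmono : ∀ i < N, x i < x (i + 1))
    (ε : ℝ) (hε : 0 < ε) (b c : ℝ → ℝ)
    (β : ℝ) (hβ : 0 < β)
    (hbl : ∀ t ∈ Set.Icc (0 : ℝ) 1, β ≤ b t)
    (hcl : ∀ t ∈ Set.Icc (0 : ℝ) 1, 0 ≤ c t) :
    (∀ i, 0 < upwind b c ε N x i i) ∧
      (∀ i j, i ≠ j → upwind b c ε N x i j ≤ 0) ∧
      (∀ i : Fin (N + 1), 0 < 2 - x (i : ℕ)) ∧
      (∀ i, min 1 β ≤ (upwind b c ε N x).mulVec (fun j : Fin (N + 1) => 2 - x (j : ℕ)) i) ∧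
      IsUnit (upwind b c ε N x) ∧
      (∀ i j, 0 ≤ (upwind b c ε N x)⁻¹ i j) ∧
      matNorm (upwind b c ε N x)⁻¹ ≤ 2 / min 1 β := by
  have hb₀ : ∀ t ∈ Icc (0 : ℝ) 1, 0 ≤ b t := fun t ht => hβ.le.trans (hbl t ht)
  have hxi : ∀ i : Fin (N + 1), x i ∈ Icc 0 1 := fun i =>
    mesh_mem_Icc hmono hx0 hxN (Nat.lt_succ_iff.mp i.isLt)
  have hoff : ∀ i j, i ≠ j → upwind b c ε N x i j ≤ 0 := fun _ _ hij =>
    upwind_apply_nonpos hmono hε hx0 hxN hb₀ hij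
  have hw : ∀ i : Fin (N + 1), 0 < 2 - x i := fun i => by linarith [(hxi i).2]
  have hγ : 0 < min 1 β := lt_min one_pos hβ
  have hAw := min_one_le_upwind_mulVec hmono hx0 hxN hbl hcl (ε := ε)
  have hAw_pos := fun i => hγ.trans_le (hAw i)
  refine ⟨upwind_apply_self_pos hmono hε hx0 hxN hb₀ hcl, hoff, hw, hAw,
    (isUnit_iff_isUnit_det _).mpr (det_ne_zero_of_mulVec_pos hoff hw hAw_pos).isUnit,
    inv_apply_nonneg_of_mulVec_pos hoff hw hAw_pos, matNorm_inv_le hoff hw hγ hAw fun i => ?_⟩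
  linarith [(hxi i).1]

/-- on an arbitrary mesh `0 = x_0 < … < x_N = 1`, the upwind matrix
`A_N` is an L-matrix, `w_i = 2 − x_i` satisfies `w > 0` and `A_N w ≥ min{1,β}`,
hence `A_N` is an M-matrix with `‖A_N⁻¹‖ ≤ 2/min{1,β}`, uniformly in `ε` and the mesh. -/
theorem stmt_8 (N : ℕ) (hN : 2 ≤ N) (x : ℕ → ℝ) (hx0 : x 0 = 0) (hxN : x N = 1)
    (hmono : ∀ i < N, x i < x (i + 1))
    (ε : ℝ) (hε : 0 < ε) (b c : ℝ → ℝ)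
    (hb : ContinuousOn b (Set.Icc 0 1)) (hc : ContinuousOn c (Set.Icc 0 1))
    (β : ℝ) (hβ : 0 < β)
    (hbl : ∀ t ∈ Set.Icc (0 : ℝ) 1, β ≤ b t)
    (hcl : ∀ t ∈ Set.Icc (0 : ℝ) 1, 0 ≤ c t) :
    (∀ i, 0 < upwind b c ε N x i i) ∧
      (∀ i j, i ≠ j → upwind b c ε N x i j ≤ 0) ∧
      (∀ i : Fin (N + 1), 0 < 2 - x (i : ℕ)) ∧
      (∀ i, min 1 β ≤ (upwind b c ε N x).mulVec (fun j : Fin (N + 1) => 2 - x (j : ℕ)) i) ∧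
      IsUnit (upwind b c ε N x) ∧
      (∀ i j, 0 ≤ (upwind b c ε N x)⁻¹ i j) ∧
      matNorm (upwind b c ε N x)⁻¹ ≤ 2 / min 1 β :=
  stmt_8_general N x hx0 hxN hmono ε hε b c β hβ hbl hcl
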